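/- arXiv:2603.24398 — 6 statements merged into one kernel-verified Lean document; each statement's English description precedes it below -/
import Mathlib

section
/- For any positive function f in H^2 of the one-dimensional torus (f of class C^2 suffices), the inequality ∫_T |∂_x (f^{1/2})|^4 dx ≤ (9/16) ∫_T (∂_xx f)^2 dx holds. -/
/-!
Write `g = f'` and `p = g²/f`. Since `(√f)' = g / (2√f)`, the left side is `(1/16) ∫ p²`.
Integrating the derivative `3 p g' - p²` of the periodic function `g³/f` over a period gives
`∫ p² = 3 ∫ p g'`, and the pointwise bound `3 p g' ≤ p²/2 + 9 g'²/2` then yields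
`∫ p² ≤ ½ ∫ p² + (9/2) ∫ g'²`, i.e. `∫ p² ≤ 9 ∫ g'²`.
-/

open MeasureTheory Set

section Deriv

variable {𝕜 : Type*} [NontriviallyNormedField 𝕜]

theorem Function.Periodic.deriv {F : Type*} [NormedAddCommGroup F] [NormedSpace 𝕜 F] {f : 𝕜 → F}
    {c : 𝕜} (h : Function.Periodic f c) : Function.Periodic (deriv f) c := fun x => by
  rw [← deriv_comp_add_const, h.funext]

theorem hasDerivAt_pow_three_div {u v : 𝕜 → 𝕜} {u' v' x : 𝕜} (hu : HasDerivAt u u' x)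
    (hv : HasDerivAt v v' x) (hv0 : v x ≠ 0) :
    HasDerivAt (fun y => u y ^ 3 / v y)
      (3 * u x ^ 2 * u' / v x - u x ^ 3 * v' / v x ^ 2) x := by
  refine ((hu.fun_pow 3).fun_div hv hv0).congr_deriv ?_
  field_simp
  norm_num
  ring

end Deriv

theorem deriv_sqrt_pow_four {f : ℝ → ℝ} {x : ℝ} (hf : DifferentiableAt ℝ f x) (hx : 0 < f x) :
    deriv (fun y => √(f y)) x ^ 4 = (deriv f x ^ 2 / f x) ^ 2 / 16 := by
  rw [deriv_sqrt hf hx.ne', div_pow, mul_pow, show √(f x) ^ 4 = (√(f x) ^ 2) ^ 2 by ring,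
    Real.sq_sqrt hx.le]
  ring

theorem integral_sq_le_nine_mul_integral_sq_of_eq {p q : ℝ → ℝ} {a b : ℝ} (hab : a ≤ b)
    (hp : ContinuousOn p (uIcc a b)) (hq : ContinuousOn q (uIcc a b))
    (hpq : ∫ x in a..b, p x ^ 2 = 3 * ∫ x in a..b, p x * q x) :
    ∫ x in a..b, p x ^ 2 ≤ 9 * ∫ x in a..b, q x ^ 2 := by
  have hamgm : ∀ x, 3 * (p x * q x) ≤ p x ^ 2 / 2 + 9 / 2 * q x ^ 2 := fun x => by
    nlinarith [sq_nonneg (p x - 3 * q x)]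
  have hp2 : IntervalIntegrable (fun x => p x ^ 2) volume a b := (hp.pow 2).intervalIntegrable
  have hq2 : IntervalIntegrable (fun x => q x ^ 2) volume a b := (hq.pow 2).intervalIntegrable
  have key : ∫ x in a..b, p x ^ 2 ≤ (∫ x in a..b, p x ^ 2) / 2 + 9 / 2 * ∫ x in a..b, q x ^ 2 :=
    calc ∫ x in a..b, p x ^ 2 = ∫ x in a..b, 3 * (p x * q x) := by
          rw [hpq, intervalIntegral.integral_const_mul]
      _ ≤ ∫ x in a..b, (p x ^ 2 / 2 + 9 / 2 * q x ^ 2) :=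
          intervalIntegral.integral_mono_on hab
            (continuousOn_const.mul (hp.mul hq)).intervalIntegrable
            (hp2.div_const 2 |>.add (hq2.const_mul _)) fun x _ => hamgm x
      _ = (∫ x in a..b, p x ^ 2) / 2 + 9 / 2 * ∫ x in a..b, q x ^ 2 := by
          rw [intervalIntegral.integral_add (hp2.div_const 2) (hq2.const_mul _),
            intervalIntegral.integral_div, intervalIntegral.integral_const_mul]
  linarith

theorem integral_sq_deriv_sq_div_eq {f : ℝ → ℝ} {a b : ℝ} (hf : ContDiff ℝ 2 f)
    (hf0 : ∀ x ∈ uIcc a b, f x ≠ 0) (hfab : f a = f b) (hf'ab : deriv f a = deriv f b) :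
    ∫ x in a..b, (deriv f x ^ 2 / f x) ^ 2
      = 3 * ∫ x in a..b, deriv f x ^ 2 / f x * deriv (deriv f) x := by
  have hfd : Differentiable ℝ f := hf.differentiable (by norm_num)
  have hf' : ContDiff ℝ 1 (deriv f) := hf.deriv' (n := 1)
  have hf'd : Differentiable ℝ (deriv f) := hf'.differentiable one_ne_zero
  have hp : ContinuousOn (fun x => deriv f x ^ 2 / f x) (uIcc a b) :=
    (hf'd.continuous.pow 2).continuousOn.div hfd.continuous.continuousOn hf0
  have hq : ContinuousOn (deriv (deriv f)) (uIcc a b) := (hf'.continuous_deriv le_rfl).continuousOn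
  have hF : ∀ x ∈ uIcc a b, HasDerivAt (fun y => deriv f y ^ 3 / f y)
      (3 * (deriv f x ^ 2 / f x * deriv (deriv f) x) - (deriv f x ^ 2 / f x) ^ 2) x :=
    fun x hx => (hasDerivAt_pow_three_div (hf'd x).hasDerivAt (hfd x).hasDerivAt
      (hf0 x hx)).congr_deriv (by ring)
  have hpq : IntervalIntegrable (fun x => 3 * (deriv f x ^ 2 / f x * deriv (deriv f) x))
      volume a b := (continuousOn_const.mul (hp.mul hq)).intervalIntegrable
  have hp2 : IntervalIntegrable (fun x => (deriv f x ^ 2 / f x) ^ 2) volume a b :=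
    (hp.pow 2).intervalIntegrable
  have hzero := intervalIntegral.integral_eq_sub_of_hasDerivAt hF (hpq.sub hp2)
  rw [hfab, hf'ab, sub_self, intervalIntegral.integral_sub hpq hp2,
    intervalIntegral.integral_const_mul] at hzero
  linarith

/-- For any positive C² periodic function `f` on the one-dimensional torus
(represented by 1-periodic functions on `ℝ`, with integrals over `[0,1]`),
`∫ |∂ₓ (f^{1/2})|⁴ ≤ (9/16) ∫ (∂ₓₓ f)²`. -/
theorem optimal_functional_inequality (f : ℝ → ℝ)
    (hper : Function.Periodic f 1) (hpos : ∀ x, 0 < f x)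
    (hf : ContDiff ℝ 2 f) :
    (∫ x in (0:ℝ)..1, (deriv (fun y => Real.sqrt (f y)) x) ^ 4)
      ≤ (9/16) * ∫ x in (0:ℝ)..1, (deriv (deriv f) x) ^ 2 := by
  have hfd : Differentiable ℝ f := hf.differentiable (by norm_num)
  have hp : Continuous fun x => deriv f x ^ 2 / f x :=
    ((hf.continuous_deriv one_le_two).pow 2).div hfd.continuous fun x => (hpos x).ne'
  have hq : Continuous (deriv (deriv f)) := (hf.deriv' (n := 1)).continuous_deriv le_rfl
  have hlhs : ∫ x in (0:ℝ)..1, deriv (fun y => √(f y)) x ^ 4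
      = (∫ x in (0:ℝ)..1, (deriv f x ^ 2 / f x) ^ 2) / 16 := by
    rw [← intervalIntegral.integral_div]
    exact intervalIntegral.integral_congr fun x _ => deriv_sqrt_pow_four (hfd x) (hpos x)
  have hbound := integral_sq_le_nine_mul_integral_sq_of_eq zero_le_one hp.continuousOn
    hq.continuousOn (integral_sq_deriv_sq_div_eq hf (fun x _ => (hpos x).ne') hper.eq.symm hper.deriv.eq.symm)
  rw [hlhs]
  linarith
end

section
/- Let α ≥ 0 and β ∈ R with α + β + 1 ≠ 0. Then the inequality (α−β−1)(1−α)/(α+β+1)^2 − β/(3(α+β+1)) + 1/9 ≥ 0 holds if and only if 2α − 4 ≤ β ≤ 2α − 1 (the strong coercivity condition). -/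
theorem bd_constant_eq {α β : ℝ} (hne : α + β + 1 ≠ 0) :
    (α - β - 1) * (1 - α) / (α + β + 1) ^ 2 - β / (3 * (α + β + 1)) + 1/9 =
      2 / (9 * (α + β + 1) ^ 2) * -((β - (2 * α - 4)) * (β - (2 * α - 1))) := by
  field_simp
  ring

theorem scc_characterization_general (α β : ℝ) (hne : α + β + 1 ≠ 0) :
    0 ≤ (α - β - 1) * (1 - α) / (α + β + 1) ^ 2 - β / (3 * (α + β + 1)) + 1/9 ↔
      (2 * α - 4 ≤ β ∧ β ≤ 2 * α - 1) := by
  rw [bd_constant_eq hne, mul_nonneg_iff_of_pos_left (by positivity), neg_nonneg]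
  exact sub_mul_sub_nonpos_iff β (by linarith : 2 * α - 4 ≤ 2 * α - 1)

/-- For `α ≥ 0`, `β ∈ ℝ` with `α + β + 1 ≠ 0`, the constant
`(α−β−1)(1−α)/(α+β+1)² − β/(3(α+β+1)) + 1/9` is nonnegative if and only if
the strong coercivity condition `2α − 4 ≤ β ≤ 2α − 1` holds. -/
theorem scc_characterization (α β : ℝ) (hα : 0 ≤ α) (hne : α + β + 1 ≠ 0) :
    0 ≤ (α - β - 1) * (1 - α) / (α + β + 1) ^ 2 - β / (3 * (α + β + 1)) + 1/9 ↔
      (2 * α - 4 ≤ β ∧ β ≤ 2 * α - 1) :=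
  scc_characterization_general α β hne
end

section
/- Let (ρ, u) be C^∞ functions on T × [0,T] with ρ > 0 solving the continuity equation ∂_t ρ + ∂_x(ρ u) = 0, and let k(ρ) = ρ^β. Then for every t, ∫_T (∂_x K) u dx = − d/dt ∫_T k(ρ) |∂_x ρ|^2 / 2 dx, where K = ρ ∂_x(k(ρ)∂_x ρ) − (1/2)(k(ρ) + ρ k'(ρ))|∂_x ρ|^2. -/
open MeasureTheory

private lemma sliceX {g : ℝ × ℝ → ℝ} (hg : Differentiable ℝ g) (t x : ℝ) :
    HasDerivAt (fun y => g (t, y)) (fderiv ℝ g (t, x) (0, 1)) x := by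
  have h : HasDerivAt (fun y : ℝ => ((t, y) : ℝ × ℝ)) ((0 : ℝ), (1 : ℝ)) x :=
    (hasDerivAt_const x t).prodMk (hasDerivAt_id x)
  exact (hg (t, x)).hasFDerivAt.comp_hasDerivAt x h

private lemma sliceT {g : ℝ × ℝ → ℝ} (hg : Differentiable ℝ g) (t x : ℝ) :
    HasDerivAt (fun s => g (s, x)) (fderiv ℝ g (t, x) (1, 0)) t := by
  have h : HasDerivAt (fun s : ℝ => ((s, x) : ℝ × ℝ)) ((1 : ℝ), (0 : ℝ)) t :=
    (hasDerivAt_id t).prodMk (hasDerivAt_const t x)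
  exact (hg (t, x)).hasFDerivAt.comp_hasDerivAt t h

private lemma cdFderivApply {g : ℝ × ℝ → ℝ} (hg : ContDiff ℝ (⊤ : ℕ∞) g) (v : ℝ × ℝ) :
    ContDiff ℝ (⊤ : ℕ∞) (fun p => fderiv ℝ g p v) :=
  (hg.fderiv_right (by simp)).clm_apply contDiff_const

private lemma fderivFderivApply {g : ℝ × ℝ → ℝ} (hg : ContDiff ℝ (⊤ : ℕ∞) g) (p v w : ℝ × ℝ) :
    fderiv ℝ (fun q => fderiv ℝ g q w) p v = fderiv ℝ (fderiv ℝ g) p v w := by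
  have hdiff : DifferentiableAt ℝ (fderiv ℝ g) p :=
    ((hg.fderiv_right (m := 1) (WithTop.coe_le_coe.mpr le_top)).differentiable one_ne_zero) p
  have h := ((ContinuousLinearMap.apply ℝ ℝ w).hasFDerivAt.comp p hdiff.hasFDerivAt).fderiv
  have e : (fun q => fderiv ℝ g q w)
      = (ContinuousLinearMap.apply ℝ ℝ w) ∘ (fderiv ℝ g) := rfl
  rw [e, h]
  rfl

private lemma mixedSwap {g : ℝ × ℝ → ℝ} (hg : ContDiff ℝ (⊤ : ℕ∞) g) (p v w : ℝ × ℝ) :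
    fderiv ℝ (fun q => fderiv ℝ g q w) p v = fderiv ℝ (fun q => fderiv ℝ g q v) p w := by
  rw [fderivFderivApply hg, fderivFderivApply hg]
  exact hg.contDiffAt.isSymmSndFDerivAt (by simp only [minSmoothness_of_isRCLikeNormedField]; exact WithTop.coe_le_coe.mpr (le_top : (2 : ℕ∞) ≤ ⊤)) v w

private lemma periodicDeriv {f : ℝ → ℝ} (hf : Function.Periodic f 1) :
    Function.Periodic (deriv f) 1 := by
  intro x
  have e : (fun y => f (y + 1)) = f := funext fun y => hf y
  rw [← deriv_comp_add_const f 1 x, e]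

private lemma parts {f g f' g' : ℝ → ℝ} (hf : ∀ x, HasDerivAt f (f' x) x)
    (hg : ∀ x, HasDerivAt g (g' x) x) (hf' : Continuous f') (hg' : Continuous g')
    (hbd : f 1 * g 1 = f 0 * g 0) :
    ∫ x in (0:ℝ)..1, f' x * g x = - ∫ x in (0:ℝ)..1, f x * g' x := by
  have hfc : Continuous f := Differentiable.continuous (fun x => (hf x).differentiableAt)
  have hgc : Continuous g := Differentiable.continuous (fun x => (hg x).differentiableAt)
  have h := intervalIntegral.integral_deriv_mul_eq_sub (a := (0:ℝ)) (b := 1)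
    (fun x _ => hf x) (fun x _ => hg x)
    (hf'.intervalIntegrable 0 1) (hg'.intervalIntegrable 0 1)
  have hsplit : (∫ x in (0:ℝ)..1, (f' x * g x + f x * g' x))
      = (∫ x in (0:ℝ)..1, f' x * g x) + ∫ x in (0:ℝ)..1, f x * g' x :=
    intervalIntegral.integral_add ((hf'.mul hgc).intervalIntegrable 0 1)
      ((hfc.mul hg').intervalIntegrable 0 1)
  rw [hsplit, hbd] at h
  linarith

private lemma rpow_sub_one_mul {a : ℝ} (ha : a ≠ 0) (γ : ℝ) :
    a ^ (γ - 1) * a = a ^ γ := by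
  rw [← Real.rpow_add_one ha (γ - 1), sub_add_cancel]

/-- If `(ρ, u)` are smooth on the torus × `[0,T]`, `ρ > 0`, and the continuity
equation `∂ₜρ + ∂ₓ(ρu) = 0` holds, then with `k(ρ) = ρ^β` the capillarity
contribution satisfies `∫ (∂ₓ K) u dx = − d/dt ∫ k(ρ)|∂ₓρ|²/2 dx`. -/
theorem korteweg_energy_contribution (β T : ℝ) (hT : 0 < T)
    (ρ u : ℝ → ℝ → ℝ)
    (hρ : ContDiff ℝ (⊤ : ℕ∞) (fun p : ℝ × ℝ => ρ p.1 p.2))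
    (hu : ContDiff ℝ (⊤ : ℕ∞) (fun p : ℝ × ℝ => u p.1 p.2))
    (hperρ : ∀ t, Function.Periodic (ρ t) 1)
    (hperu : ∀ t, Function.Periodic (u t) 1)
    (hpos : ∀ t x, 0 < ρ t x)
    (hcont : ∀ t x, deriv (fun s => ρ s x) t
      + deriv (fun y => ρ t y * u t y) x = 0)
    (t : ℝ) (ht : t ∈ Set.Icc 0 T) :
    (∫ x in (0:ℝ)..1,
        deriv (fun y => ρ t y * deriv (fun z => ρ t z ^ β * deriv (ρ t) z) y
          - (1/2) * (ρ t y ^ β + ρ t y * (β * ρ t y ^ (β - 1)))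
            * (deriv (ρ t) y) ^ 2) x * u t x)
      = - deriv (fun s => ∫ x in (0:ℝ)..1,
          ρ s x ^ β * (deriv (ρ s) x) ^ 2 / 2) t := by
  -- names for the relevant two-variable functions
  set F : ℝ × ℝ → ℝ := fun p => ρ p.1 p.2 with hFdef
  set U : ℝ × ℝ → ℝ := fun p => u p.1 p.2 with hUdef
  have hFS : ContDiff ℝ (⊤ : ℕ∞) F := hρ
  have hUS : ContDiff ℝ (⊤ : ℕ∞) U := hu
  set Fx : ℝ × ℝ → ℝ := fun p => fderiv ℝ F p (0, 1) with hFxdef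
  set Ft : ℝ × ℝ → ℝ := fun p => fderiv ℝ F p (1, 0) with hFtdef
  have hFxS : ContDiff ℝ (⊤ : ℕ∞) Fx := cdFderivApply hFS _
  have hFtS : ContDiff ℝ (⊤ : ℕ∞) Ft := cdFderivApply hFS _
  have hPow : ∀ γ : ℝ, ContDiff ℝ (⊤ : ℕ∞) (fun p => F p ^ γ) := fun γ =>
    contDiff_iff_contDiffAt.mpr fun p => hFS.contDiffAt.rpow_const_of_ne (hpos p.1 p.2).ne'
  set A2 : ℝ × ℝ → ℝ := fun p => F p ^ β * Fx p with hA2def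
  have hA2S : ContDiff ℝ (⊤ : ℕ∞) A2 := (hPow β).mul hFxS
  set Ax : ℝ × ℝ → ℝ := fun p => fderiv ℝ A2 p (0, 1) with hAxdef
  have hAxS : ContDiff ℝ (⊤ : ℕ∞) Ax := cdFderivApply hA2S _
  set Axx : ℝ × ℝ → ℝ := fun p => fderiv ℝ Ax p (0, 1) with hAxxdef
  set Fxx : ℝ × ℝ → ℝ := fun p => fderiv ℝ Fx p (0, 1) with hFxxdef
  set M : ℝ × ℝ → ℝ := fun p => Ax p - β / 2 * (F p ^ (β - 1) * Fx p ^ 2) with hMdef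
  have hMS : ContDiff ℝ (⊤ : ℕ∞) M :=
    hAxS.sub (contDiff_const.mul ((hPow (β - 1)).mul (hFxS.pow 2)))
  set Mx : ℝ × ℝ → ℝ := fun p => fderiv ℝ M p (0, 1) with hMxdef
  have hMxS : ContDiff ℝ (⊤ : ℕ∞) Mx := cdFderivApply hMS _
  set K2 : ℝ × ℝ → ℝ := fun p => F p * Ax p
      - 1 / 2 * (F p ^ β + F p * (β * F p ^ (β - 1))) * Fx p ^ 2 with hK2def
  have hK2S : ContDiff ℝ (⊤ : ℕ∞) K2 :=
    (hFS.mul hAxS).sub ((contDiff_const.mul ((hPow β).add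
      (hFS.mul (contDiff_const.mul (hPow (β - 1)))))).mul (hFxS.pow 2))
  set Kx : ℝ × ℝ → ℝ := fun p => fderiv ℝ K2 p (0, 1) with hKxdef
  set W : ℝ × ℝ → ℝ := fun p => F p * U p with hWdef
  have hWS : ContDiff ℝ (⊤ : ℕ∞) W := hFS.mul hUS
  set Wx : ℝ × ℝ → ℝ := fun p => fderiv ℝ W p (0, 1) with hWxdef
  have hWxS : ContDiff ℝ (⊤ : ℕ∞) Wx := cdFderivApply hWS _
  set G : ℝ × ℝ → ℝ := fun p => F p ^ β * Fx p ^ 2 / 2 with hGdef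
  have hGS : ContDiff ℝ (⊤ : ℕ∞) G := ((hPow β).mul (hFxS.pow 2)).div_const 2
  set Gt : ℝ × ℝ → ℝ := fun p => fderiv ℝ G p (1, 0) with hGtdef
  have hGtS : ContDiff ℝ (⊤ : ℕ∞) Gt := cdFderivApply hGS _
  set Fxt : ℝ × ℝ → ℝ := fun p => fderiv ℝ Fx p (1, 0) with hFxtdef
  set Ftx : ℝ × ℝ → ℝ := fun p => fderiv ℝ Ft p (0, 1) with hFtxdef
  have hFtxS : ContDiff ℝ (⊤ : ℕ∞) Ftx := cdFderivApply hFtS _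
  -- differentiability
  have hFd : Differentiable ℝ F := hFS.differentiable (by simp)
  have hFxd : Differentiable ℝ Fx := hFxS.differentiable (by simp)
  have hFtd : Differentiable ℝ Ft := hFtS.differentiable (by simp)
  have hA2d : Differentiable ℝ A2 := hA2S.differentiable (by simp)
  have hAxd : Differentiable ℝ Ax := hAxS.differentiable (by simp)
  have hMd : Differentiable ℝ M := hMS.differentiable (by simp)
  have hK2d : Differentiable ℝ K2 := hK2S.differentiable (by simp)
  have hWd : Differentiable ℝ W := hWS.differentiable (by simp)
  have hGd : Differentiable ℝ G := hGS.differentiable (by simp)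
  have hFne : ∀ s x, F (s, x) ≠ 0 := fun s x => (hpos s x).ne'
  -- continuity of slices at time t
  have contSlice : ∀ {g : ℝ × ℝ → ℝ}, ContDiff ℝ (⊤ : ℕ∞) g → Continuous (fun y : ℝ => g (t, y)) :=
    fun {g} hg => hg.continuous.comp (continuous_const.prodMk continuous_id)
  -- derivative dictionary
  have dρ : ∀ s x, deriv (ρ s) x = Fx (s, x) := fun s x => (sliceX hFd s x).deriv
  have dρt : ∀ x, deriv (fun s => ρ s x) t = Ft (t, x) := fun x => (sliceT hFd t x).deriv
  -- periodicity of slices at time t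
  have pF : ∀ s, Function.Periodic (fun y => F (s, y)) 1 := fun s => hperρ s
  have pFx : ∀ s, Function.Periodic (fun y => Fx (s, y)) 1 := by
    intro s y
    have h := periodicDeriv (hperρ s) y
    simp only at h ⊢
    rw [← dρ s (y + 1), ← dρ s y]
    exact h
  have pFt : Function.Periodic (fun y => Ft (t, y)) 1 := by
    intro y
    have e : (fun s => ρ s (y + 1)) = fun s => ρ s y := funext fun s => hperρ s y
    simp only
    rw [← dρt (y + 1), ← dρt y]
    exact congrFun (congrArg deriv e) t
  have pA2 : Function.Periodic (fun y => A2 (t, y)) 1 := by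
    intro y
    have h1 : F (t, y + 1) = F (t, y) := pF t y
    have h2 : Fx (t, y + 1) = Fx (t, y) := pFx t y
    simp only [hA2def]
    rw [h1, h2]
  have pAx : Function.Periodic (fun y => Ax (t, y)) 1 := by
    intro y
    have e : (fun y => Ax (t, y)) = deriv (fun y => A2 (t, y)) :=
      funext fun z => ((sliceX hA2d t z).deriv).symm
    have h := periodicDeriv pA2 y
    simp only
    rw [show Ax (t, y + 1) = deriv (fun y => A2 (t, y)) (y + 1) from congrFun e (y + 1),
      show Ax (t, y) = deriv (fun y => A2 (t, y)) y from congrFun e y]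
    exact h
  have pM : Function.Periodic (fun y => M (t, y)) 1 := by
    intro y
    have h0 : Ax (t, y + 1) = Ax (t, y) := pAx y
    have h1 : F (t, y + 1) = F (t, y) := pF t y
    have h2 : Fx (t, y + 1) = Fx (t, y) := pFx t y
    simp only [hMdef]
    rw [h0, h1, h2]
  have pW : Function.Periodic (fun y => W (t, y)) 1 := by
    intro y
    have h1 : F (t, y + 1) = F (t, y) := pF t y
    have h2 : U (t, y + 1) = U (t, y) := hperu t y
    simp only [hWdef]
    rw [h1, h2]
  -- continuity equation
  have hFtW : ∀ x, Ft (t, x) = - Wx (t, x) := by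
    intro x
    have h := hcont t x
    rw [dρt x] at h
    have e : deriv (fun y => ρ t y * u t y) x = Wx (t, x) := (sliceX hWd t x).deriv
    rw [e] at h
    linarith
  -- pointwise x-derivative formulas at time t
  have hA : ∀ x, Ax (t, x) = Fx (t, x) * β * F (t, x) ^ (β - 1) * Fx (t, x)
      + F (t, x) ^ β * Fxx (t, x) :=
    fun x => (sliceX hA2d t x).unique
      (((sliceX hFd t x).rpow_const (Or.inl (hFne t x))).mul (sliceX hFxd t x))
  have hM' : ∀ x, Mx (t, x) = Axx (t, x) - β / 2 *
      ((Fx (t, x) * (β - 1) * F (t, x) ^ (β - 1 - 1)) * Fx (t, x) ^ 2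
        + F (t, x) ^ (β - 1) * (((2 : ℕ) : ℝ) * Fx (t, x) ^ 1 * Fxx (t, x))) :=
    fun x => (sliceX hMd t x).unique
      ((sliceX hAxd t x).sub (HasDerivAt.const_mul (β / 2)
        (((sliceX hFd t x).rpow_const (Or.inl (hFne t x))).mul ((sliceX hFxd t x).pow 2))))
  have hK' : ∀ x, Kx (t, x) =
      (Fx (t, x) * Ax (t, x) + F (t, x) * Axx (t, x))
      - ((1 / 2 : ℝ) * ((Fx (t, x) * β * F (t, x) ^ (β - 1))
            + (Fx (t, x) * (β * F (t, x) ^ (β - 1))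
              + F (t, x) * (β * (Fx (t, x) * (β - 1) * F (t, x) ^ (β - 1 - 1)))))
          * Fx (t, x) ^ 2
        + (1 / 2 : ℝ) * (F (t, x) ^ β + F (t, x) * (β * F (t, x) ^ (β - 1)))
          * (((2 : ℕ) : ℝ) * Fx (t, x) ^ 1 * Fxx (t, x))) :=
    fun x => (sliceX hK2d t x).unique
      (((sliceX hFd t x).mul (sliceX hAxd t x)).sub
        ((HasDerivAt.const_mul (1 / 2 : ℝ)
          (((sliceX hFd t x).rpow_const (Or.inl (hFne t x))).add
            ((sliceX hFd t x).mul (HasDerivAt.const_mul β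
              ((sliceX hFd t x).rpow_const (Or.inl (hFne t x))))))).mul
          ((sliceX hFxd t x).pow 2)))
  -- the key pointwise identity ∂ₓ K = ρ ∂ₓ m
  have hKM : ∀ x, Kx (t, x) = F (t, x) * Mx (t, x) := by
    intro x
    rw [hK' x, hM' x, hA x]
    have r2 : F (t, x) ^ (β - 1) * F (t, x) = F (t, x) ^ β :=
      rpow_sub_one_mul (hFne t x) β
    have r1 : F (t, x) ^ (β - 1 - 1) * F (t, x) = F (t, x) ^ (β - 1) :=
      rpow_sub_one_mul (hFne t x) (β - 1)
    rw [← r2, ← r1]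
    push_cast
    ring
  -- t-derivative of the integrand of the energy
  have hGt' : ∀ x, Gt (t, x) =
      ((Ft (t, x) * β * F (t, x) ^ (β - 1)) * Fx (t, x) ^ 2
        + F (t, x) ^ β * (((2 : ℕ) : ℝ) * Fx (t, x) ^ 1 * Fxt (t, x))) / 2 :=
    fun x => (sliceT hGd t x).unique
      ((((sliceT hFd t x).rpow_const (Or.inl (hFne t x))).mul
        ((sliceT hFxd t x).pow 2)).div_const 2)
  -- symmetry of second derivatives
  have hswap : ∀ x, Fxt (t, x) = Ftx (t, x) := fun x => mixedSwap hFS (t, x) (1, 0) (0, 1)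
  -- differentiation under the integral sign
  have key : HasDerivAt (fun s => ∫ x in (0:ℝ)..1, G (s, x))
      (∫ x in (0:ℝ)..1, Gt (t, x)) t := by
    have hcompact : IsCompact (Set.Icc (t - 1) (t + 1) ×ˢ Set.Icc (0:ℝ) 1) :=
      isCompact_Icc.prod isCompact_Icc
    obtain ⟨C, hC⟩ := hcompact.exists_bound_of_continuousOn hGtS.continuous.continuousOn
    have h := intervalIntegral.hasDerivAt_integral_of_dominated_loc_of_deriv_le
      (F := fun s x => G (s, x)) (F' := fun s x => Gt (s, x)) (x₀ := t)
      (a := (0:ℝ)) (b := 1) (bound := fun _ => C) (s := Metric.ball t 1) (μ := volume) (Metric.ball_mem_nhds t one_pos)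
      (Filter.Eventually.of_forall fun s =>
        (hGS.continuous.comp (continuous_const.prodMk continuous_id)).aestronglyMeasurable)
      ((hGS.continuous.comp (continuous_const.prodMk continuous_id)).intervalIntegrable 0 1)
      ((hGtS.continuous.comp
        (continuous_const.prodMk continuous_id)).aestronglyMeasurable)
      ?_ intervalIntegrable_const ?_
    · exact h.2
    · refine Filter.Eventually.of_forall fun x hx s hs => hC (s, x) ?_
      constructor
      · rw [Real.ball_eq_Ioo] at hs
        exact Set.Ioo_subset_Icc_self hs
      · have : x ∈ Set.Ioc (0:ℝ) 1 := by
          rwa [Set.uIoc_of_le (by norm_num : (0:ℝ) ≤ 1)] at hx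
        exact Set.Ioc_subset_Icc_self this
    · exact Filter.Eventually.of_forall fun x _ s _ => sliceT hGd s x
  -- rewrite the energy functional via G
  have hEfun : (fun s => ∫ x in (0:ℝ)..1, ρ s x ^ β * (deriv (ρ s) x) ^ 2 / 2)
      = fun s => ∫ x in (0:ℝ)..1, G (s, x) := by
    funext s
    refine intervalIntegral.integral_congr fun x _ => ?_
    rw [dρ s x]
  -- the t-derivative of the energy integrand, with mixed partials swapped
  have hGtint : ∀ x, Gt (t, x) =
      β * F (t, x) ^ (β - 1) * Fx (t, x) ^ 2 * Ft (t, x) / 2 + Ftx (t, x) * A2 (t, x) := by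
    intro x
    rw [hGt' x, hswap x]
    simp only [hA2def]
    push_cast
    ring
  -- continuity facts for slices
  have cF : Continuous (fun y : ℝ => F (t, y)) := contSlice hFS
  have cFx : Continuous (fun y : ℝ => Fx (t, y)) := contSlice hFxS
  have cFt : Continuous (fun y : ℝ => Ft (t, y)) := contSlice hFtS
  have cFtx : Continuous (fun y : ℝ => Ftx (t, y)) := contSlice hFtxS
  have cA2 : Continuous (fun y : ℝ => A2 (t, y)) := contSlice hA2S
  have cAx : Continuous (fun y : ℝ => Ax (t, y)) := contSlice hAxS
  have cM : Continuous (fun y : ℝ => M (t, y)) := contSlice hMS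
  have cMx : Continuous (fun y : ℝ => Mx (t, y)) := contSlice hMxS
  have cW : Continuous (fun y : ℝ => W (t, y)) := contSlice hWS
  have cWx : Continuous (fun y : ℝ => Wx (t, y)) := contSlice hWxS
  have cPow : ∀ γ : ℝ, Continuous (fun y : ℝ => F (t, y) ^ γ) := fun γ => contSlice (hPow γ)
  have int1 : IntervalIntegrable
      (fun x => β * F (t, x) ^ (β - 1) * Fx (t, x) ^ 2 * Ft (t, x) / 2) volume 0 1 :=
    ((((continuous_const.mul (cPow (β - 1))).mul (cFx.pow 2)).mul cFt).div_const 2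
      ).intervalIntegrable 0 1
  have int2 : IntervalIntegrable (fun x => Ftx (t, x) * A2 (t, x)) volume 0 1 :=
    (cFtx.mul cA2).intervalIntegrable 0 1
  have int3 : IntervalIntegrable (fun x => Ft (t, x) * Ax (t, x)) volume 0 1 :=
    (cFt.mul cAx).intervalIntegrable 0 1
  -- split the integral of Gt
  have c1 : (∫ x in (0:ℝ)..1, Gt (t, x))
      = (∫ x in (0:ℝ)..1, β * F (t, x) ^ (β - 1) * Fx (t, x) ^ 2 * Ft (t, x) / 2)
        + ∫ x in (0:ℝ)..1, Ftx (t, x) * A2 (t, x) := by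
    rw [← intervalIntegral.integral_add int1 int2]
    exact intervalIntegral.integral_congr fun x _ => hGtint x
  -- integrate by parts (first time)
  have e1 : Ft (t, 1) = Ft (t, 0) := by simpa using pFt 0
  have e2 : A2 (t, 1) = A2 (t, 0) := by simpa using pA2 0
  have c2 : (∫ x in (0:ℝ)..1, Ftx (t, x) * A2 (t, x))
      = - ∫ x in (0:ℝ)..1, Ft (t, x) * Ax (t, x) :=
    parts (fun x => sliceX hFtd t x) (fun x => sliceX hA2d t x) cFtx cAx
      (by rw [e1, e2])
  -- use the continuity equation
  have c3 : (∫ x in (0:ℝ)..1, β * F (t, x) ^ (β - 1) * Fx (t, x) ^ 2 * Ft (t, x) / 2)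
        - (∫ x in (0:ℝ)..1, Ft (t, x) * Ax (t, x))
      = ∫ x in (0:ℝ)..1, Wx (t, x) * M (t, x) := by
    rw [← intervalIntegral.integral_sub int1 int3]
    refine intervalIntegral.integral_congr fun x _ => ?_
    rw [hFtW x]
    simp only [hMdef]
    ring
  -- integrate by parts (second time)
  have e3 : W (t, 1) = W (t, 0) := by simpa using pW 0
  have e4 : M (t, 1) = M (t, 0) := by simpa using pM 0
  have c4 : (∫ x in (0:ℝ)..1, Wx (t, x) * M (t, x))
      = - ∫ x in (0:ℝ)..1, W (t, x) * Mx (t, x) :=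
    parts (fun x => sliceX hWd t x) (fun x => sliceX hMd t x) cWx cMx
      (by rw [e3, e4])
  -- identify the left-hand side
  have hbigEq : (fun y => ρ t y * deriv (fun z => ρ t z ^ β * deriv (ρ t) z) y
          - (1/2) * (ρ t y ^ β + ρ t y * (β * ρ t y ^ (β - 1)))
            * (deriv (ρ t) y) ^ 2) = fun y => K2 (t, y) := by
    funext y
    have eA : (fun z => ρ t z ^ β * deriv (ρ t) z) = fun z => A2 (t, z) := by
      funext z
      rw [dρ t z]
    rw [eA, dρ t y,
      show deriv (fun z => A2 (t, z)) y = Ax (t, y) from (sliceX hA2d t y).deriv]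
  have hLHS : (∫ x in (0:ℝ)..1,
        deriv (fun y => ρ t y * deriv (fun z => ρ t z ^ β * deriv (ρ t) z) y
          - (1/2) * (ρ t y ^ β + ρ t y * (β * ρ t y ^ (β - 1)))
            * (deriv (ρ t) y) ^ 2) x * u t x)
      = ∫ x in (0:ℝ)..1, W (t, x) * Mx (t, x) := by
    refine intervalIntegral.integral_congr fun x _ => ?_
    rw [hbigEq,
      show deriv (fun y => K2 (t, y)) x = Kx (t, x) from (sliceX hK2d t x).deriv,
      hKM x]
    show F (t, x) * Mx (t, x) * u t x = W (t, x) * Mx (t, x)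
    simp only [hWdef, hUdef]
    ring
  rw [hLHS, hEfun, key.deriv]
  linarith [c1, c2, c3, c4]
end

section
/- Let ρ : T → (0,∞) be smooth, k(ρ) = ρ^β, μ(ρ) = ρ^α with α + β + 1 ≠ 0, and let K be the Korteweg tensor and Q = ρ^{α−2}∂_x ρ. Then, after integration by parts on T, −∫_T (∂_x K) Q dx = (4/(α+β+1)^2) ∫_T |∂_xx(ρ^{(α+β+1)/2})|^2 dx + c(α,β) ∫_T |∂_x(ρ^{(α+β+1)/4})|^4 dx, where c(α,β) = (64/(α+β+1)^2)[ (α−β−1)(1−α)/(α+β+1)^2 − β/(3(α+β+1)) ]. -/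
open MeasureTheory
open scoped ContDiff

namespace CapAux

noncomputable def Kg (β : ℝ) (ρ : ℝ → ℝ) : ℝ → ℝ := fun y =>
  ρ y ^ (β + 1) * deriv (deriv ρ) y + (β - 1) / 2 * ρ y ^ β * (deriv ρ y) ^ 2

noncomputable def KD (β : ℝ) (ρ : ℝ → ℝ) : ℝ → ℝ := fun x =>
  deriv ρ x * (β + 1) * (ρ x ^ (β - 1) * ρ x) * deriv (deriv ρ) x
    + ρ x ^ (β - 1) * ρ x * ρ x * deriv (deriv (deriv ρ)) x
    + (β - 1) / 2 * (deriv ρ x * β * ρ x ^ (β - 1) * (deriv ρ x) ^ 2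
        + ρ x ^ (β - 1) * ρ x * (2 * deriv ρ x * deriv (deriv ρ) x))

noncomputable def QD (α : ℝ) (ρ : ℝ → ℝ) : ℝ → ℝ := fun x =>
  deriv ρ x * (α - 2) * ρ x ^ (α - 3) * deriv ρ x
    + ρ x ^ (α - 3) * ρ x * deriv (deriv ρ) x

noncomputable def GF (α β : ℝ) (ρ : ℝ → ℝ) : ℝ → ℝ := fun x =>
  -(Kg β ρ x * (ρ x ^ (α - 2) * deriv ρ x))
    - (β + 3) / 6 * ρ x ^ (α + β + 1 - 3) * (deriv ρ x) ^ 3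

noncomputable def GD (α β : ℝ) (ρ : ℝ → ℝ) : ℝ → ℝ := fun x =>
  -(KD β ρ x * (ρ x ^ (α - 3) * ρ x * deriv ρ x) + Kg β ρ x * QD α ρ x)
    - (β + 3) / 6 * (deriv ρ x * (α + β + 1 - 3)
          * (ρ x ^ (β - 1) * ρ x ^ (α - 3) * ρ x) * (deriv ρ x) ^ 3
        + ρ x ^ (β - 1) * ρ x ^ (α - 3) * (ρ x * ρ x)
          * (3 * (deriv ρ x) ^ 2 * deriv (deriv ρ) x))

noncomputable def W1 (α β : ℝ) (ρ : ℝ → ℝ) : ℝ → ℝ := fun x =>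
  deriv ρ x * ((α + β + 1) / 2) * ρ x ^ ((α + β + 1) / 2 - 1)

noncomputable def W2 (α β : ℝ) (ρ : ℝ → ℝ) : ℝ → ℝ := fun x =>
  deriv (deriv ρ) x * ((α + β + 1) / 2) * (ρ x ^ ((α + β + 1) / 2 - 2) * ρ x)
    + deriv ρ x * ((α + β + 1) / 2)
        * (deriv ρ x * ((α + β + 1) / 2 - 1) * ρ x ^ ((α + β + 1) / 2 - 2))

noncomputable def V1 (α β : ℝ) (ρ : ℝ → ℝ) : ℝ → ℝ := fun x =>
  deriv ρ x * ((α + β + 1) / 4) * ρ x ^ ((α + β + 1) / 4 - 1)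

/-- The core algebraic identity. -/
theorem cap_alg (α β t a b d A B W V : ℝ) (hne : α + β + 1 ≠ 0)
    (hW : W * W = A * B * t) (hV : V * V * (V * V) = A * B * t) :
    -((a * (β + 1) * (A * t) * b + A * t * t * d
        + (β - 1) / 2 * (a * β * A * a ^ 2 + A * t * (2 * a * b)))
      * (B * t * a))
      = 4 / (α + β + 1) ^ 2
          * (b * ((α + β + 1) / 2) * (W * t)
            + a * ((α + β + 1) / 2) * (a * ((α + β + 1) / 2 - 1) * W)) ^ 2
        + (64 / (α + β + 1) ^ 2
            * ((α - β - 1) * (1 - α) / (α + β + 1) ^ 2 - β / (3 * (α + β + 1))))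
          * (a * ((α + β + 1) / 4) * V) ^ 4
        + (-((a * (β + 1) * (A * t) * b + A * t * t * d
              + (β - 1) / 2 * (a * β * A * a ^ 2 + A * t * (2 * a * b)))
              * (B * t * a)
            + (A * t * t * b + (β - 1) / 2 * (A * t) * a ^ 2)
              * (a * (α - 2) * B * a + B * t * b))
          - (β + 3) / 6 * (a * (α + β + 1 - 3) * (A * B * t) * a ^ 3
              + A * B * t * t * (3 * a ^ 2 * b))) := by
  have h1 : (b * ((α + β + 1) / 2) * (W * t)
      + a * ((α + β + 1) / 2) * (a * ((α + β + 1) / 2 - 1) * W)) ^ 2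
      = A * B * t * (b * ((α + β + 1) / 2) * t
          + a * ((α + β + 1) / 2) * (a * ((α + β + 1) / 2 - 1))) ^ 2 := by
    rw [← hW]; ring
  have h2 : (a * ((α + β + 1) / 4) * V) ^ 4
      = A * B * t * (a * ((α + β + 1) / 4)) ^ 4 := by
    rw [← hV]; ring
  rw [h1, h2]
  field_simp
  ring

end CapAux

open CapAux

/-- Capillarity contribution in the BD entropy balance: for smooth positive `ρ`
on the torus, with `K` the Korteweg tensor (`k(ρ)=ρ^β`), `Q = ρ^{α−2}∂ₓρ` and
`α+β+1 ≠ 0`, one has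
`−∫ (∂ₓK) Q = (4/(α+β+1)²)∫ |∂ₓₓ(ρ^{(α+β+1)/2})|² + c(α,β)∫ |∂ₓ(ρ^{(α+β+1)/4})|⁴`. -/
theorem capillarity_bd_contribution (α β : ℝ) (hα : 0 ≤ α)
    (hne : α + β + 1 ≠ 0) (ρ : ℝ → ℝ)
    (hper : Function.Periodic ρ 1) (hpos : ∀ x, 0 < ρ x)
    (hsm : ContDiff ℝ (⊤ : ℕ∞) ρ) :
    -(∫ x in (0:ℝ)..1,
        deriv (fun y => ρ y * deriv (fun z => ρ z ^ β * deriv ρ z) y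
          - (1/2) * (ρ y ^ β + ρ y * (β * ρ y ^ (β - 1))) * (deriv ρ y) ^ 2) x
          * (ρ x ^ (α - 2) * deriv ρ x))
      = (4 / (α + β + 1) ^ 2) *
          (∫ x in (0:ℝ)..1, |deriv (deriv (fun y => ρ y ^ ((α + β + 1) / 2))) x| ^ 2)
        + ((64 / (α + β + 1) ^ 2) *
            ((α - β - 1) * (1 - α) / (α + β + 1) ^ 2 - β / (3 * (α + β + 1)))) *
          ∫ x in (0:ℝ)..1, |deriv (fun y => ρ y ^ ((α + β + 1) / 4)) x| ^ 4 := by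
  have tne : ∀ x, ρ x ≠ 0 := fun x => (hpos x).ne'
  -- smoothness of iterated derivatives
  have hinf : (∞ : WithTop ℕ∞) ≠ 0 := by simp
  have hsm0 : ContDiff ℝ ∞ ρ := hsm.of_le (by simp)
  have hsm1 : ContDiff ℝ ∞ (deriv ρ) := (contDiff_infty_iff_deriv.mp hsm0).2
  have hsm2 : ContDiff ℝ ∞ (deriv (deriv ρ)) := (contDiff_infty_iff_deriv.mp hsm1).2
  have hc0 : Continuous ρ := hsm.continuous
  have hc1 : Continuous (deriv ρ) := hsm1.continuous
  have hc2 : Continuous (deriv (deriv ρ)) := hsm2.continuous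
  have hc3 : Continuous (deriv (deriv (deriv ρ))) :=
    ((contDiff_infty_iff_deriv.mp hsm2).2).continuous
  have hd1 : ∀ x, HasDerivAt ρ (deriv ρ x) x := fun x =>
    ((hsm0.differentiable hinf) x).hasDerivAt
  have hd2 : ∀ x, HasDerivAt (deriv ρ) (deriv (deriv ρ) x) x := fun x =>
    ((hsm1.differentiable hinf) x).hasDerivAt
  have hd3 : ∀ x, HasDerivAt (deriv (deriv ρ)) (deriv (deriv (deriv ρ)) x) x := fun x =>
    ((hsm2.differentiable hinf) x).hasDerivAt
  -- periodicity of derivatives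
  have hper1 : Function.Periodic (deriv ρ) 1 := by
    intro x
    have h : deriv (fun y => ρ (y + 1)) x = deriv ρ x := by rw [hper.funext]
    simpa [deriv_comp_add_const] using h
  have hper2 : Function.Periodic (deriv (deriv ρ)) 1 := by
    intro x
    have h : deriv (fun y => deriv ρ (y + 1)) x = deriv (deriv ρ) x := by
      rw [hper1.funext]
    simpa [deriv_comp_add_const] using h
  -- rpow exponent relations
  have pβ : ∀ x, ρ x ^ β = ρ x ^ (β - 1) * ρ x := fun x => by
    rw [show β = β - 1 + 1 by ring, Real.rpow_add_one (tne x)]; ring_nf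
  have pβ1 : ∀ x, ρ x ^ (β + 1) = ρ x ^ (β - 1) * ρ x * ρ x := fun x => by
    rw [show β + 1 = β - 1 + 1 + 1 by ring, Real.rpow_add_one (tne x),
      Real.rpow_add_one (tne x)]
  have pβ1' : ∀ x, ρ x ^ (β + 1 - 1) = ρ x ^ (β - 1) * ρ x := fun x => by
    rw [show β + 1 - 1 = β - 1 + 1 by ring, Real.rpow_add_one (tne x)]
  have pα2 : ∀ x, ρ x ^ (α - 2) = ρ x ^ (α - 3) * ρ x := fun x => by
    rw [show α - 2 = α - 3 + 1 by ring, Real.rpow_add_one (tne x)]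
  have pα2' : ∀ x, ρ x ^ (α - 2 - 1) = ρ x ^ (α - 3) := fun x => by
    rw [show α - 2 - 1 = α - 3 by ring]
  have pγ3 : ∀ x, ρ x ^ (α + β + 1 - 3)
      = ρ x ^ (β - 1) * ρ x ^ (α - 3) * (ρ x * ρ x) := fun x => by
    rw [show α + β + 1 - 3 = β - 1 + (α - 3) + 1 + 1 by ring,
      Real.rpow_add_one (tne x), Real.rpow_add_one (tne x),
      Real.rpow_add (hpos x)]
    ring
  have pγ4 : ∀ x, ρ x ^ (α + β + 1 - 3 - 1)
      = ρ x ^ (β - 1) * ρ x ^ (α - 3) * ρ x := fun x => by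
    rw [show α + β + 1 - 3 - 1 = β - 1 + (α - 3) + 1 by ring,
      Real.rpow_add_one (tne x), Real.rpow_add (hpos x)]
  have pw1 : ∀ x, ρ x ^ ((α + β + 1) / 2 - 1)
      = ρ x ^ ((α + β + 1) / 2 - 2) * ρ x := fun x => by
    rw [show (α + β + 1) / 2 - 1 = (α + β + 1) / 2 - 2 + 1 by ring,
      Real.rpow_add_one (tne x)]
  have pw2 : ∀ x, ρ x ^ ((α + β + 1) / 2 - 1 - 1)
      = ρ x ^ ((α + β + 1) / 2 - 2) := fun x => by
    rw [show (α + β + 1) / 2 - 1 - 1 = (α + β + 1) / 2 - 2 by ring]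
  have hWrel : ∀ x, ρ x ^ ((α + β + 1) / 2 - 2) * ρ x ^ ((α + β + 1) / 2 - 2)
      = ρ x ^ (β - 1) * ρ x ^ (α - 3) * ρ x := fun x => by
    rw [← Real.rpow_add (hpos x),
      show (α + β + 1) / 2 - 2 + ((α + β + 1) / 2 - 2) = β - 1 + (α - 3) + 1 by ring,
      Real.rpow_add_one (tne x), Real.rpow_add (hpos x)]
  have hVrel : ∀ x, ρ x ^ ((α + β + 1) / 4 - 1) * ρ x ^ ((α + β + 1) / 4 - 1)
        * (ρ x ^ ((α + β + 1) / 4 - 1) * ρ x ^ ((α + β + 1) / 4 - 1))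
      = ρ x ^ (β - 1) * ρ x ^ (α - 3) * ρ x := fun x => by
    rw [← Real.rpow_add (hpos x), ← Real.rpow_add (hpos x), ← Real.rpow_add (hpos x),
      show (α + β + 1) / 4 - 1 + ((α + β + 1) / 4 - 1)
          + ((α + β + 1) / 4 - 1 + ((α + β + 1) / 4 - 1)) = β - 1 + (α - 3) + 1 by ring,
      Real.rpow_add_one (tne x), Real.rpow_add (hpos x)]
  -- identify the Korteweg tensor with its simplified form
  have hKfun : (fun y => ρ y * deriv (fun z => ρ z ^ β * deriv ρ z) y
      - (1/2) * (ρ y ^ β + ρ y * (β * ρ y ^ (β - 1))) * (deriv ρ y) ^ 2) = Kg β ρ := by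
    funext y
    have hF : HasDerivAt (fun z => ρ z ^ β * deriv ρ z)
        (deriv ρ y * β * ρ y ^ (β - 1) * deriv ρ y + ρ y ^ β * deriv (deriv ρ) y) y :=
      ((hd1 y).rpow_const (Or.inl (tne y))).mul (hd2 y)
    rw [hF.deriv, Kg]
    rw [pβ y, pβ1 y]
    ring
  rw [hKfun]
  -- derivative of Kg
  have hKg' : ∀ x, HasDerivAt (Kg β ρ) (KD β ρ x) x := by
    intro x
    have h := (((hd1 x).rpow_const (p := β + 1) (Or.inl (tne x))).mul (hd3 x)).add
      (((((hd1 x).rpow_const (p := β) (Or.inl (tne x))).const_mul ((β - 1) / 2))).mul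
        ((hd2 x).pow 2))
    convert h using 1
    all_goals try rfl
    simp only [Pi.pow_apply, Pi.mul_apply]
    rw [KD, pβ1' x, pβ1 x, pβ x]
    push_cast
    ring
  -- derivative of GF
  have hG' : ∀ x, HasDerivAt (GF α β ρ) (GD α β ρ x) x := by
    intro x
    have h := (((hKg' x).mul (((hd1 x).rpow_const (p := α - 2) (Or.inl (tne x))).mul (hd2 x))).neg).sub
      (((((hd1 x).rpow_const (p := α + β + 1 - 3) (Or.inl (tne x))).const_mul ((β + 3) / 6))).mul
        ((hd2 x).pow 3))
    convert h using 1
    all_goals try rfl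
    simp only [Pi.pow_apply, Pi.mul_apply]
    rw [GD, QD, pα2' x, pα2 x, pγ4 x, pγ3 x]
    push_cast
    ring
  -- first derivative of the W-power
  have hW1 : deriv (fun y => ρ y ^ ((α + β + 1) / 2)) = W1 α β ρ := by
    funext x
    exact ((hd1 x).rpow_const (Or.inl (tne x))).deriv
  have hW2' : ∀ x, HasDerivAt (W1 α β ρ) (W2 α β ρ x) x := by
    intro x
    have h := (((hd2 x).mul_const ((α + β + 1) / 2)).mul
      ((hd1 x).rpow_const (p := (α + β + 1) / 2 - 1) (Or.inl (tne x))))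
    convert h using 1
    all_goals try rfl
    rw [W2, pw1 x, pw2 x]
  have hW2 : deriv (W1 α β ρ) = W2 α β ρ := funext fun x => (hW2' x).deriv
  have hV1 : deriv (fun y => ρ y ^ ((α + β + 1) / 4)) = V1 α β ρ := by
    funext x
    exact ((hd1 x).rpow_const (Or.inl (tne x))).deriv
  rw [hW1, hW2, hV1]
  -- remove absolute values
  have habs4 : ∀ y : ℝ, |y| ^ 4 = y ^ 4 := fun y => by
    rw [← abs_pow]; exact abs_of_nonneg (by positivity)
  simp only [sq_abs, habs4]
  -- pointwise key identity
  have key : ∀ x, -(deriv (Kg β ρ) x * (ρ x ^ (α - 2) * deriv ρ x))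
      = 4 / (α + β + 1) ^ 2 * (W2 α β ρ x) ^ 2
        + (64 / (α + β + 1) ^ 2
            * ((α - β - 1) * (1 - α) / (α + β + 1) ^ 2 - β / (3 * (α + β + 1))))
          * (V1 α β ρ x) ^ 4
        + GD α β ρ x := by
    intro x
    rw [(hKg' x).deriv]
    simp only [Kg, KD, GD, QD, W2, V1]
    rw [pα2 x, pβ x, pβ1 x]
    linear_combination cap_alg α β (ρ x) (deriv ρ x) (deriv (deriv ρ) x)
      (deriv (deriv (deriv ρ)) x) (ρ x ^ (β - 1)) (ρ x ^ (α - 3))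
      (ρ x ^ ((α + β + 1) / 2 - 2)) (ρ x ^ ((α + β + 1) / 4 - 1)) hne
      (hWrel x) (hVrel x)
  -- continuity and integrability
  have hrpC : ∀ e : ℝ, Continuous fun x => ρ x ^ e := fun e =>
    hc0.rpow_const fun x => Or.inl (tne x)
  have contKg : Continuous (Kg β ρ) := by
    unfold Kg
    exact ((hrpC _).mul hc2).add
      (((continuous_const.mul (hrpC _)).mul (hc1.pow 2)))
  have contKD : Continuous (KD β ρ) := by
    unfold KD
    exact ((((hc1.mul continuous_const).mul ((hrpC _).mul hc0)).mul hc2).add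
      ((((hrpC _).mul hc0).mul hc0).mul hc3)).add
      (continuous_const.mul
        ((((hc1.mul continuous_const).mul (hrpC _)).mul (hc1.pow 2)).add
          (((hrpC _).mul hc0).mul ((continuous_const.mul hc1).mul hc2))))
  have contQD : Continuous (QD α ρ) := by
    unfold QD
    exact (((hc1.mul continuous_const).mul (hrpC _)).mul hc1).add
      (((hrpC _).mul hc0).mul hc2)
  have contGD : Continuous (GD α β ρ) := by
    unfold GD
    exact (((contKD.mul (((hrpC _).mul hc0).mul hc1)).add (contKg.mul contQD)).neg).sub
      (continuous_const.mul
        ((((hc1.mul continuous_const).mul (((hrpC _).mul (hrpC _)).mul hc0)).mul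
            (hc1.pow 3)).add
          ((((hrpC _).mul (hrpC _)).mul (hc0.mul hc0)).mul
            ((continuous_const.mul (hc1.pow 2)).mul hc2))))
  have contW2 : Continuous (W2 α β ρ) := by
    unfold W2
    exact ((hc2.mul continuous_const).mul ((hrpC _).mul hc0)).add
      ((hc1.mul continuous_const).mul ((hc1.mul continuous_const).mul (hrpC _)))
  have contV1 : Continuous (V1 α β ρ) := by
    unfold V1
    exact (hc1.mul continuous_const).mul (hrpC _)
  have int1 : IntervalIntegrable
      (fun x => 4 / (α + β + 1) ^ 2 * (W2 α β ρ x) ^ 2) volume 0 1 :=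
    (continuous_const.mul (contW2.pow 2)).intervalIntegrable 0 1
  have int2 : IntervalIntegrable
      (fun x => (64 / (α + β + 1) ^ 2
          * ((α - β - 1) * (1 - α) / (α + β + 1) ^ 2 - β / (3 * (α + β + 1))))
        * (V1 α β ρ x) ^ 4) volume 0 1 :=
    (continuous_const.mul (contV1.pow 4)).intervalIntegrable 0 1
  have int3 : IntervalIntegrable (GD α β ρ) volume 0 1 :=
    contGD.intervalIntegrable 0 1
  -- the exact-derivative term integrates to zero by periodicity
  have hGint : (∫ x in (0:ℝ)..1, GD α β ρ x) = 0 := by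
    rw [intervalIntegral.integral_eq_sub_of_hasDerivAt (fun x _ => hG' x) int3]
    have q0 : ρ 1 = ρ 0 := by simpa using hper 0
    have q1 : deriv ρ 1 = deriv ρ 0 := by simpa using hper1 0
    have q2 : deriv (deriv ρ) 1 = deriv (deriv ρ) 0 := by simpa using hper2 0
    simp only [GF, Kg, q0, q1, q2, sub_self]
  -- assemble
  rw [← intervalIntegral.integral_neg]
  rw [intervalIntegral.integral_congr (g := fun x =>
      4 / (α + β + 1) ^ 2 * (W2 α β ρ x) ^ 2
        + (64 / (α + β + 1) ^ 2
            * ((α - β - 1) * (1 - α) / (α + β + 1) ^ 2 - β / (3 * (α + β + 1))))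
          * (V1 α β ρ x) ^ 4
        + GD α β ρ x) (fun x _ => key x)]
  rw [intervalIntegral.integral_add (int1.add int2) int3,
    intervalIntegral.integral_add int1 int2, hGint,
    intervalIntegral.integral_const_mul, intervalIntegral.integral_const_mul]
  ring
end

section
/- With μ'_k(ρ) = ρ^{(β+1)/2} and A = ρ^{(β−1)/2}∂_x ρ smooth on the one-dimensional torus, one has ∂_x μ'_k(ρ) = ((β+1)/2) A, and the second-order cancellation identity −∫_T ∂_x^3(μ'_k(ρ)∂_x u) ∂_xx A dx + ∫_T ∂_x^3(μ'_k(ρ)∂_x A) ∂_xx u dx = −((β+1)/2)∫_T |∂_xx A|^2 ∂_x u dx − ((β+1)/2)∫_T ∂_x A ∂_xx A ∂_xx u dx − (2β+2)∫_T A ∂_xx A ∂_x^3 u dx. -/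
open MeasureTheory

private lemma cdD {f : ℝ → ℝ} (hf : ContDiff ℝ (⊤:ℕ∞) f) : Differentiable ℝ f :=
  hf.differentiable (by norm_cast)

private lemma cdd {f : ℝ → ℝ} (hf : ContDiff ℝ (⊤:ℕ∞) f) : ContDiff ℝ (⊤:ℕ∞) (deriv f) :=
  (contDiff_infty_iff_deriv.mp hf).2

private lemma perd {f : ℝ → ℝ} (h : Function.Periodic f 1) :
    Function.Periodic (deriv f) 1 := fun x => by
  have e : (fun y => f (y + 1)) = f := funext h
  rw [← deriv_comp_add_const f 1 x, e]

private lemma cdrpow {f : ℝ → ℝ} (hf : ContDiff ℝ (⊤:ℕ∞) f) (hpos : ∀ x, 0 < f x) (p : ℝ) :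
    ContDiff ℝ (⊤:ℕ∞) (fun x => f x ^ p) := by
  have : (fun x => f x ^ p) = fun x => Real.exp (Real.log (f x) * p) := by
    funext x; rw [Real.rpow_def_of_pos (hpos x)]
  rw [this]
  exact Real.contDiff_exp.comp ((hf.log fun x => (hpos x).ne').mul contDiff_const)

private lemma deriv_fun_mul' {f g : ℝ → ℝ} (hf : Differentiable ℝ f) (hg : Differentiable ℝ g) :
    deriv (fun x => f x * g x) = fun x => deriv f x * g x + f x * deriv g x :=
  funext fun x => deriv_mul (hf x) (hg x)

private lemma deriv3_mul {f g : ℝ → ℝ} (hf : ContDiff ℝ (⊤:ℕ∞) f) (hg : ContDiff ℝ (⊤:ℕ∞) g) :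
    deriv (deriv (deriv (fun x => f x * g x))) = fun x =>
      deriv (deriv (deriv f)) x * g x + 3 * (deriv (deriv f) x * deriv g x)
        + 3 * (deriv f x * deriv (deriv g) x) + f x * deriv (deriv (deriv g)) x := by
  have hf1 := cdd hf; have hf2 := cdd hf1
  have hg1 := cdd hg; have hg2 := cdd hg1
  have e1 : deriv (fun x => f x * g x) = fun x => deriv f x * g x + f x * deriv g x :=
    deriv_fun_mul' (cdD hf) (cdD hg)
  have e2 : deriv (deriv (fun x => f x * g x)) = fun x =>
      deriv (deriv f) x * g x + 2 * (deriv f x * deriv g x) + f x * deriv (deriv g) x := by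
    rw [e1]; funext x
    have H := (((cdD hf1 x).hasDerivAt.mul (cdD hg x).hasDerivAt).add
      ((cdD hf x).hasDerivAt.mul (cdD hg1 x).hasDerivAt))
    have H' : HasDerivAt (fun x => deriv f x * g x + f x * deriv g x) _ x := H
    rw [H'.deriv]; ring
  rw [e2]; funext x
  have H := ((((cdD hf2 x).hasDerivAt.mul (cdD hg x).hasDerivAt).add
      (((cdD hf1 x).hasDerivAt.mul (cdD hg1 x).hasDerivAt).const_mul 2)).add
      ((cdD hf x).hasDerivAt.mul (cdD hg2 x).hasDerivAt))
  have H' : HasDerivAt (fun x =>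
      deriv (deriv f) x * g x + 2 * (deriv f x * deriv g x) + f x * deriv (deriv g) x) _ x := H
  rw [H'.deriv]; ring

private noncomputable def DD (c : ℝ) (m A u : ℝ → ℝ) : ℝ → ℝ := fun x =>
  -(deriv (deriv (deriv (fun y => m y * deriv u y))) x * deriv (deriv A) x)
  + deriv (deriv (deriv (fun y => m y * deriv A y))) x * deriv (deriv u) x
  + c * ((deriv (deriv A) x) ^ 2 * deriv u x)
  + c * (deriv A x * deriv (deriv A) x * deriv (deriv u) x)
  + (4 * c) * (A x * deriv (deriv A) x * deriv (deriv (deriv u)) x)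

private noncomputable def FF (c : ℝ) (m A u : ℝ → ℝ) : ℝ → ℝ := fun x =>
  c * deriv A x * (deriv A x * deriv (deriv u) x - deriv u x * deriv (deriv A) x)
  + m x * (deriv (deriv (deriv A)) x * deriv (deriv u) x
      - deriv (deriv (deriv u)) x * deriv (deriv A) x)
  + c * (deriv A x * (deriv (deriv A) x * deriv u x)
      - deriv A x * (deriv A x * deriv (deriv u) x)
      + 2 * (A x * (deriv (deriv A) x * deriv (deriv u) x)))

private lemma key (c : ℝ) (m A u : ℝ → ℝ)
    (hm : ContDiff ℝ (⊤:ℕ∞) m) (hA : ContDiff ℝ (⊤:ℕ∞) A) (hu : ContDiff ℝ (⊤:ℕ∞) u)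
    (hm1 : deriv m = fun x => c * A x)
    (hpm : Function.Periodic m 1) (hpA : Function.Periodic A 1)
    (hpu : Function.Periodic u 1) :
    (-(∫ x in (0:ℝ)..1,
          deriv (deriv (deriv (fun y => m y * deriv u y))) x * deriv (deriv A) x)
      + ∫ x in (0:ℝ)..1,
          deriv (deriv (deriv (fun y => m y * deriv A y))) x * deriv (deriv u) x)
    = -c * (∫ x in (0:ℝ)..1, (deriv (deriv A) x) ^ 2 * deriv u x)
      - c * (∫ x in (0:ℝ)..1, deriv A x * deriv (deriv A) x * deriv (deriv u) x)
      - (4 * c) * ∫ x in (0:ℝ)..1,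
          A x * deriv (deriv A) x * deriv (deriv (deriv u)) x := by
  have hA1 := cdd hA; have hA2 := cdd hA1; have hA3 := cdd hA2
  have hu1 := cdd hu; have hu2 := cdd hu1; have hu3 := cdd hu2
  have hm2 : deriv (deriv m) = fun x => c * deriv A x := by
    rw [hm1]; funext x; exact deriv_const_mul_field c
  have hm3 : deriv (deriv (deriv m)) = fun x => c * deriv (deriv A) x := by
    rw [hm2]; funext x; exact deriv_const_mul_field c
  have eT1 := deriv3_mul hm hu1
  have eT2 := deriv3_mul hm hA1
  have hm1' : ∀ x, deriv m x = c * A x := fun x => by rw [hm1]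
  have hm2' : ∀ x, deriv (deriv m) x = c * deriv A x := fun x => by rw [hm2]
  have hm3' : ∀ x, deriv (deriv (deriv m)) x = c * deriv (deriv A) x := fun x => by rw [hm3]
  -- F' = D pointwise
  have hFD : ∀ x, HasDerivAt (FF c m A u) (DD c m A u x) x := by
    intro x
    have HA := (cdD hA x).hasDerivAt
    have HA1 := (cdD hA1 x).hasDerivAt
    have HA2 := (cdD hA2 x).hasDerivAt
    have HA3 := (cdD hA3 x).hasDerivAt
    have HU := (cdD hu x).hasDerivAt
    have HU1 := (cdD hu1 x).hasDerivAt
    have HU2 := (cdD hu2 x).hasDerivAt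
    have HU3 := (cdD hu3 x).hasDerivAt
    have HM := (cdD hm x).hasDerivAt
    have H := (((HA1.const_mul c).mul ((HA1.mul HU2).sub (HU1.mul HA2))).add
        (HM.mul ((HA3.mul HU2).sub (HU3.mul HA2)))).add
        ((((HA1.mul (HA2.mul HU1)).sub (HA1.mul (HA1.mul HU2))).add
          ((HA.mul (HA2.mul HU2)).const_mul 2)).const_mul c)
    have H' : HasDerivAt (FF c m A u) _ x := H
    convert H' using 1
    simp only [DD, eT1, eT2, hm1', hm2', hm3', Pi.mul_apply, Pi.sub_apply, Pi.add_apply]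
    ring
  -- continuity of D
  have cT1 : Continuous (deriv (deriv (deriv (fun y => m y * deriv u y)))) :=
    (cdd (cdd (cdd (hm.mul hu1)))).continuous
  have cT2 : Continuous (deriv (deriv (deriv (fun y => m y * deriv A y)))) :=
    (cdd (cdd (cdd (hm.mul hA1)))).continuous
  have i1 : IntervalIntegrable
      (fun x => -(deriv (deriv (deriv (fun y => m y * deriv u y))) x * deriv (deriv A) x))
      volume 0 1 :=
    ((cT1.mul hA2.continuous).neg).intervalIntegrable 0 1
  have i2 : IntervalIntegrable
      (fun x => deriv (deriv (deriv (fun y => m y * deriv A y))) x * deriv (deriv u) x)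
      volume 0 1 :=
    (cT2.mul hu2.continuous).intervalIntegrable 0 1
  have i3 : IntervalIntegrable (fun x => c * ((deriv (deriv A) x) ^ 2 * deriv u x))
      volume 0 1 :=
    (continuous_const.mul ((hA2.continuous.pow 2).mul hu1.continuous)).intervalIntegrable 0 1
  have i4 : IntervalIntegrable
      (fun x => c * (deriv A x * deriv (deriv A) x * deriv (deriv u) x)) volume 0 1 :=
    (continuous_const.mul ((hA1.continuous.mul hA2.continuous).mul
      hu2.continuous)).intervalIntegrable 0 1
  have i5 : IntervalIntegrable
      (fun x => (4 * c) * (A x * deriv (deriv A) x * deriv (deriv (deriv u)) x)) volume 0 1 :=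
    (continuous_const.mul ((hA.continuous.mul hA2.continuous).mul
      hu3.continuous)).intervalIntegrable 0 1
  have hint : IntervalIntegrable (DD c m A u) volume 0 1 := by
    have := (((i1.add i2).add i3).add i4).add i5
    exact this
  have h0 : ∫ x in (0:ℝ)..1, DD c m A u x = FF c m A u 1 - FF c m A u 0 :=
    intervalIntegral.integral_eq_sub_of_hasDerivAt (fun x _ => hFD x) hint
  have pv : ∀ (f : ℝ → ℝ), Function.Periodic f 1 → f 1 = f 0 := fun f h => by
    simpa using h 0
  have h00 : ∫ x in (0:ℝ)..1, DD c m A u x = 0 := by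
    rw [h0]
    simp only [FF, pv m hpm, pv A hpA, pv _ (perd hpA), pv _ (perd (perd hpA)),
      pv _ (perd (perd (perd hpA))), pv u hpu, pv _ (perd hpu), pv _ (perd (perd hpu)),
      pv _ (perd (perd (perd hpu)))]
    ring
  have hsplit : ∫ x in (0:ℝ)..1, DD c m A u x
      = (-(∫ x in (0:ℝ)..1,
            deriv (deriv (deriv (fun y => m y * deriv u y))) x * deriv (deriv A) x)
        + ∫ x in (0:ℝ)..1,
            deriv (deriv (deriv (fun y => m y * deriv A y))) x * deriv (deriv u) x)
        + c * (∫ x in (0:ℝ)..1, (deriv (deriv A) x) ^ 2 * deriv u x)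
        + c * (∫ x in (0:ℝ)..1, deriv A x * deriv (deriv A) x * deriv (deriv u) x)
        + (4 * c) * ∫ x in (0:ℝ)..1,
            A x * deriv (deriv A) x * deriv (deriv (deriv u)) x := by
    simp only [DD]
    rw [intervalIntegral.integral_add (((i1.add i2).add i3).add i4) i5,
      intervalIntegral.integral_add ((i1.add i2).add i3) i4,
      intervalIntegral.integral_add (i1.add i2) i3,
      intervalIntegral.integral_add i1 i2,
      intervalIntegral.integral_neg, intervalIntegral.integral_const_mul,
      intervalIntegral.integral_const_mul, intervalIntegral.integral_const_mul]
  rw [hsplit] at h00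
  linarith [h00]

/-- With `μ'ₖ(ρ) = ρ^{(β+1)/2}` and `A = ρ^{(β−1)/2}∂ₓρ` smooth on the torus:
`∂ₓμ'ₖ(ρ) = ((β+1)/2)A`, and the second-order cancellation identity
`−∫∂ₓ³(μ'ₖ∂ₓu)∂ₓₓA + ∫∂ₓ³(μ'ₖ∂ₓA)∂ₓₓu
 = −((β+1)/2)∫|∂ₓₓA|²∂ₓu − ((β+1)/2)∫∂ₓA ∂ₓₓA ∂ₓₓu − (2β+2)∫A ∂ₓₓA ∂ₓ³u`. -/
theorem second_order_cancellation (β : ℝ) (ρ u : ℝ → ℝ)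
    (hperρ : Function.Periodic ρ 1) (hperu : Function.Periodic u 1)
    (hpos : ∀ x, 0 < ρ x) (hρ : ContDiff ℝ (⊤ : ℕ∞) ρ) (hu : ContDiff ℝ (⊤ : ℕ∞) u) :
    (∀ x, deriv (fun y => ρ y ^ ((β + 1) / 2)) x
        = ((β + 1) / 2) * (ρ x ^ ((β - 1) / 2) * deriv ρ x)) ∧
    (-(∫ x in (0:ℝ)..1,
          deriv (deriv (deriv (fun y => ρ y ^ ((β + 1) / 2) * deriv u y))) x
            * deriv (deriv (fun y => ρ y ^ ((β - 1) / 2) * deriv ρ y)) x)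
      + ∫ x in (0:ℝ)..1,
          deriv (deriv (deriv (fun y => ρ y ^ ((β + 1) / 2)
              * deriv (fun z => ρ z ^ ((β - 1) / 2) * deriv ρ z) y))) x
            * deriv (deriv u) x)
    = -((β + 1) / 2) * (∫ x in (0:ℝ)..1,
          (deriv (deriv (fun y => ρ y ^ ((β - 1) / 2) * deriv ρ y)) x) ^ 2
            * deriv u x)
      - ((β + 1) / 2) * (∫ x in (0:ℝ)..1,
          deriv (fun y => ρ y ^ ((β - 1) / 2) * deriv ρ y) x
            * deriv (deriv (fun y => ρ y ^ ((β - 1) / 2) * deriv ρ y)) x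
            * deriv (deriv u) x)
      - (2 * β + 2) * ∫ x in (0:ℝ)..1,
          (ρ x ^ ((β - 1) / 2) * deriv ρ x)
            * deriv (deriv (fun y => ρ y ^ ((β - 1) / 2) * deriv ρ y)) x
            * deriv (deriv (deriv u)) x := by
  have hρ' : ContDiff ℝ (⊤:ℕ∞) ρ := hρ.of_le (by simp)
  have hu' : ContDiff ℝ (⊤:ℕ∞) u := hu.of_le (by simp)
  have h1 : ∀ x, deriv (fun y => ρ y ^ ((β + 1) / 2)) x
      = ((β + 1) / 2) * (ρ x ^ ((β - 1) / 2) * deriv ρ x) := by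
    intro x
    have h := (HasDerivAt.rpow_const (p := (β + 1) / 2)
      (cdD hρ' x).hasDerivAt (Or.inl (hpos x).ne')).deriv
    rw [h, show (β + 1) / 2 - 1 = (β - 1) / 2 by ring]
    ring
  refine ⟨h1, ?_⟩
  have hm : ContDiff ℝ (⊤:ℕ∞) (fun y => ρ y ^ ((β + 1) / 2)) := cdrpow hρ' hpos _
  have hA : ContDiff ℝ (⊤:ℕ∞) (fun y => ρ y ^ ((β - 1) / 2) * deriv ρ y) :=
    (cdrpow hρ' hpos _).mul (cdd hρ')
  have hm1 : deriv (fun y => ρ y ^ ((β + 1) / 2))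
      = fun x => ((β + 1) / 2) * ((fun y => ρ y ^ ((β - 1) / 2) * deriv ρ y) x) :=
    funext fun x => h1 x
  have hpm : Function.Periodic (fun y => ρ y ^ ((β + 1) / 2)) 1 := fun x => by
    simp only [hperρ x]
  have hpA : Function.Periodic (fun y => ρ y ^ ((β - 1) / 2) * deriv ρ y) 1 := fun x => by
    simp only [hperρ x, perd hperρ x]
  have h42 : (2 * β + 2 : ℝ) = 4 * ((β + 1) / 2) := by ring
  rw [h42]
  exact key ((β + 1) / 2) (fun y => ρ y ^ ((β + 1) / 2))
    (fun y => ρ y ^ ((β - 1) / 2) * deriv ρ y) u hm hA hu' hm1 hpm hpA hperu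
end

section
/- Let ρ, u be smooth on T × [0,T] with ρ > 0 satisfying the continuity equation ∂_t ρ + ∂_x(ρu) = 0, and let A = √(k(ρ)/ρ) ∂_x ρ with k(ρ) = ρ^β, μ'_k(ρ) = √(ρ k(ρ)). Then A satisfies the equation ∂_t A + ∂_x(Au) + ∂_x(μ'_k(ρ)∂_x u) = 0. -/
open MeasureTheory

noncomputable def D1 (F : ℝ × ℝ → ℝ) : ℝ × ℝ → ℝ := fun p => fderiv ℝ F p (1, 0)
noncomputable def D2 (F : ℝ × ℝ → ℝ) : ℝ × ℝ → ℝ := fun p => fderiv ℝ F p (0, 1)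

theorem contDiff_D1 {F : ℝ × ℝ → ℝ} (hF : ContDiff ℝ (⊤ : ℕ∞) F) : ContDiff ℝ (⊤ : ℕ∞) (D1 F) :=
  (hF.fderiv_right (by simp)).clm_apply contDiff_const

theorem contDiff_D2 {F : ℝ × ℝ → ℝ} (hF : ContDiff ℝ (⊤ : ℕ∞) F) : ContDiff ℝ (⊤ : ℕ∞) (D2 F) :=
  (hF.fderiv_right (by simp)).clm_apply contDiff_const

theorem slice1 {F : ℝ × ℝ → ℝ} (hF : ContDiff ℝ (⊤ : ℕ∞) F) (t x : ℝ) :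
    HasDerivAt (fun s => F (s, x)) (D1 F (t, x)) t := by
  have h1 : HasDerivAt (fun s : ℝ => (s, x)) ((1 : ℝ), (0 : ℝ)) t :=
    (hasDerivAt_id t).prodMk (hasDerivAt_const t x)
  exact ((hF.differentiable (by simp) (t, x)).hasFDerivAt).comp_hasDerivAt t h1

theorem slice2 {F : ℝ × ℝ → ℝ} (hF : ContDiff ℝ (⊤ : ℕ∞) F) (t x : ℝ) :
    HasDerivAt (fun y => F (t, y)) (D2 F (t, x)) x := by
  have h1 : HasDerivAt (fun y : ℝ => (t, y)) ((0 : ℝ), (1 : ℝ)) x :=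
    (hasDerivAt_const x t).prodMk (hasDerivAt_id x)
  exact ((hF.differentiable (by simp) (t, x)).hasFDerivAt).comp_hasDerivAt x h1

theorem mixed_symm {F : ℝ × ℝ → ℝ} (hF : ContDiff ℝ (⊤ : ℕ∞) F) (p : ℝ × ℝ) :
    D1 (D2 F) p = D2 (D1 F) p := by
  have hdF : Differentiable ℝ (fderiv ℝ F) :=
    (hF.fderiv_right (m := 1) (by exact WithTop.coe_le_coe.mpr le_top)).differentiable (by simp)
  have hsymm := second_derivative_symmetric
    (fun y => ((hF.differentiable (by simp)) y).hasFDerivAt) (hdF p).hasFDerivAt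
  have e2 : ∀ (v : ℝ × ℝ), fderiv ℝ (fun q => fderiv ℝ F q v) p =
      (fderiv ℝ (fderiv ℝ F) p).flip v := by
    intro v
    have := fderiv_clm_apply (hdF p) (differentiableAt_const v)
    simpa [fderiv_const] using this
  show fderiv ℝ (fun q => fderiv ℝ F q (0,1)) p (1,0)
      = fderiv ℝ (fun q => fderiv ℝ F q (1,0)) p (0,1)
  rw [e2, e2]
  exact hsymm _ _

theorem aux_A (α : ℝ) (F G : ℝ × ℝ → ℝ) (hF : ContDiff ℝ (⊤ : ℕ∞) F) (hG : ContDiff ℝ (⊤ : ℕ∞) G)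
    (hpos : ∀ p, 0 < F p)
    (hCE : ∀ p : ℝ × ℝ, D1 F p = -(D2 F p * G p + F p * D2 G p)) (t x : ℝ) :
    deriv (fun s => F (s, x) ^ α * D2 F (s, x)) t
      + deriv (fun y => (F (t, y) ^ α * D2 F (t, y)) * G (t, y)) x
      + deriv (fun y => F (t, y) ^ (α + 1) * D2 G (t, y)) x = 0 := by
  have hr : F (t, x) ≠ 0 := (hpos (t, x)).ne'
  have h1 : HasDerivAt (fun s => F (s, x)) (D1 F (t, x)) t := slice1 hF t x
  have h2 : HasDerivAt (fun s => D2 F (s, x)) (D1 (D2 F) (t, x)) t :=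
    slice1 (contDiff_D2 hF) t x
  have hp1 : HasDerivAt (fun s => F (s, x) ^ α)
      (D1 F (t, x) * α * F (t, x) ^ (α - 1)) t := h1.rpow_const (Or.inl hr)
  have hT1 : HasDerivAt (fun s => F (s, x) ^ α * D2 F (s, x))
      (D1 F (t, x) * α * F (t, x) ^ (α - 1) * D2 F (t, x)
        + F (t, x) ^ α * D1 (D2 F) (t, x)) t := hp1.mul h2
  have hx1 : HasDerivAt (fun y => F (t, y)) (D2 F (t, x)) x := slice2 hF t x
  have hx2 : HasDerivAt (fun y => D2 F (t, y)) (D2 (D2 F) (t, x)) x :=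
    slice2 (contDiff_D2 hF) t x
  have hxG : HasDerivAt (fun y => G (t, y)) (D2 G (t, x)) x := slice2 hG t x
  have hxu2 : HasDerivAt (fun y => D2 G (t, y)) (D2 (D2 G) (t, x)) x :=
    slice2 (contDiff_D2 hG) t x
  have hpx : HasDerivAt (fun y => F (t, y) ^ α)
      (D2 F (t, x) * α * F (t, x) ^ (α - 1)) x := hx1.rpow_const (Or.inl hr)
  have hT2 : HasDerivAt (fun y => (F (t, y) ^ α * D2 F (t, y)) * G (t, y))
      ((D2 F (t, x) * α * F (t, x) ^ (α - 1) * D2 F (t, x)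
          + F (t, x) ^ α * D2 (D2 F) (t, x)) * G (t, x)
        + (F (t, x) ^ α * D2 F (t, x)) * D2 G (t, x)) x := (hpx.mul hx2).mul hxG
  have hpx3 : HasDerivAt (fun y => F (t, y) ^ (α + 1))
      (D2 F (t, x) * (α + 1) * F (t, x) ^ (α + 1 - 1)) x := hx1.rpow_const (Or.inl hr)
  have hT3 : HasDerivAt (fun y => F (t, y) ^ (α + 1) * D2 G (t, y))
      (D2 F (t, x) * (α + 1) * F (t, x) ^ (α + 1 - 1) * D2 G (t, x)
        + F (t, x) ^ (α + 1) * D2 (D2 G) (t, x)) x := hpx3.mul hxu2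
  have hfun : (fun y => D1 F (t, y))
      = fun y => -(D2 F (t, y) * G (t, y) + F (t, y) * D2 G (t, y)) := by
    funext y; exact hCE (t, y)
  have hL : HasDerivAt (fun y => D1 F (t, y)) (D2 (D1 F) (t, x)) x :=
    slice2 (contDiff_D1 hF) t x
  have hR : HasDerivAt (fun y => -(D2 F (t, y) * G (t, y) + F (t, y) * D2 G (t, y)))
      (-((D2 (D2 F) (t, x) * G (t, x) + D2 F (t, x) * D2 G (t, x))
        + (D2 F (t, x) * D2 G (t, x) + F (t, x) * D2 (D2 G) (t, x)))) x :=
    ((hx2.mul hxG).add (hx1.mul hxu2)).neg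
  have hrtx : D1 (D2 F) (t, x)
      = -((D2 (D2 F) (t, x) * G (t, x) + D2 F (t, x) * D2 G (t, x))
        + (D2 F (t, x) * D2 G (t, x) + F (t, x) * D2 (D2 G) (t, x))) := by
    rw [mixed_symm hF]
    exact (hfun ▸ hL).unique hR
  rw [hT1.deriv, hT2.deriv, hT3.deriv, hrtx, hCE (t, x),
    show α + 1 - 1 = α from by ring, Real.rpow_add_one hr α,
    show F (t, x) ^ α = F (t, x) ^ (α - 1) * F (t, x) from by
      rw [← Real.rpow_add_one hr (α - 1)]; norm_num]
  ring

/-- Augmented-variable equation: if smooth `(ρ,u)` with `ρ > 0` satisfy the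
continuity equation `∂ₜρ + ∂ₓ(ρu) = 0`, then `A = ρ^{(β−1)/2}∂ₓρ` satisfies
`∂ₜA + ∂ₓ(Au) + ∂ₓ(μ'ₖ(ρ)∂ₓu) = 0`, where `μ'ₖ(ρ) = ρ^{(β+1)/2}`. -/
theorem augmented_A_equation (β T : ℝ) (hT : 0 < T) (ρ u : ℝ → ℝ → ℝ)
    (hρ : ContDiff ℝ (⊤ : ℕ∞) (fun p : ℝ × ℝ => ρ p.1 p.2))
    (hu : ContDiff ℝ (⊤ : ℕ∞) (fun p : ℝ × ℝ => u p.1 p.2))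
    (hperρ : ∀ t, Function.Periodic (ρ t) 1)
    (hperu : ∀ t, Function.Periodic (u t) 1)
    (hpos : ∀ t x, 0 < ρ t x)
    (hcont : ∀ t x, deriv (fun s => ρ s x) t
      + deriv (fun y => ρ t y * u t y) x = 0)
    (t x : ℝ) :
    deriv (fun s => ρ s x ^ ((β - 1) / 2) * deriv (ρ s) x) t
      + deriv (fun y => (ρ t y ^ ((β - 1) / 2) * deriv (ρ t) y) * u t y) x
      + deriv (fun y => ρ t y ^ ((β + 1) / 2) * deriv (u t) y) x = 0 := by
  set F : ℝ × ℝ → ℝ := fun p => ρ p.1 p.2 with hFdef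
  set G : ℝ × ℝ → ℝ := fun p => u p.1 p.2 with hGdef
  have hCE : ∀ p : ℝ × ℝ, D1 F p = -(D2 F p * G p + F p * D2 G p) := by
    rintro ⟨s, y⟩
    have h1 : HasDerivAt (fun s' => ρ s' y) (D1 F (s, y)) s := slice1 hρ s y
    have h2 : HasDerivAt (fun z => ρ s z * u s z)
        (D2 F (s, y) * G (s, y) + F (s, y) * D2 G (s, y)) y :=
      (slice2 hρ s y).mul (slice2 hu s y)
    have h := hcont s y
    rw [h1.deriv, h2.deriv] at h
    linarith
  have hd2ρ : ∀ s z, deriv (ρ s) z = D2 F (s, z) := fun s z => (slice2 hρ s z).deriv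
  have hd2u : ∀ s z, deriv (u s) z = D2 G (s, z) := fun s z => (slice2 hu s z).deriv
  simp only [hd2ρ, hd2u]
  rw [show (β + 1) / 2 = (β - 1) / 2 + 1 from by ring]
  exact aux_A ((β - 1) / 2) F G hρ hu (fun p => hpos p.1 p.2) hCE t x
end
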